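/- arXiv:1510.00558 — 5 statements merged into one kernel-verified Lean document; each statement's English description precedes it below -/
import Mathlib

section
/- Let W be a real n×n matrix such that x^T W x > 0 for all nonzero x (i.e., its symmetric part is positive definite), and let R ∈ ℝ^n. Suppose y* ∈ ℝ^n_{>0} satisfies -R_i - Σ_k W_{ik} y*_k = 0 for all i, and y : ℝ → ℝ^n_{>0} is a differentiable solution of dy_i/dt = y_i(-R_i - Σ_k W_{ik} y_k). Then the function V(y) = Σ_i (y_i - y*_i - y*_i log(y_i / y*_i)) satisfies dV(y(t))/dt = -(y(t)-y*)^T W (y(t)-y*) ≤ 0, with equality iff y(t) = y*. -/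
open Matrix

open Real

/-- Lyapunov decrease for the Lotka–Volterra system with positive-definite
interaction matrix W: along positive solutions of
dy_i/dt = y_i(-R_i - Σ_k W_{ik} y_k), the function
V = Σ_i (y_i - y*_i - y*_i log(y_i/y*_i)) satisfies
dV/dt = -(y-y*)ᵀ W (y-y*) ≤ 0, with equality iff y = y*. -/
theorem stmt_7 (n : ℕ) (hn : 1 ≤ n) (W : Matrix (Fin n) (Fin n) ℝ)
    (hW : ∀ x : Fin n → ℝ, x ≠ 0 → 0 < x ⬝ᵥ W.mulVec x)
    (R ystar : Fin n → ℝ) (hystar : ∀ i, 0 < ystar i)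
    (heq : ∀ i, R i + ∑ k, W i k * ystar k = 0)
    (y : ℝ → Fin n → ℝ) (hypos : ∀ t i, 0 < y t i)
    (hy : ∀ t i, HasDerivAt (fun s => y s i)
      (y t i * (-R i - ∑ k, W i k * y t k)) t) :
    ∀ t, HasDerivAt
        (fun s => ∑ i, (y s i - ystar i - ystar i * Real.log (y s i / ystar i)))
        (-((y t - ystar) ⬝ᵥ W.mulVec (y t - ystar))) t ∧
      -((y t - ystar) ⬝ᵥ W.mulVec (y t - ystar)) ≤ 0 ∧
      (-((y t - ystar) ⬝ᵥ W.mulVec (y t - ystar)) = 0 ↔ y t = ystar) := by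
  intro t
  have key : 0 ≤ (y t - ystar) ⬝ᵥ W.mulVec (y t - ystar) ∧
      ((y t - ystar) ⬝ᵥ W.mulVec (y t - ystar) = 0 ↔ y t = ystar) := by
    by_cases h : y t = ystar
    · simp [h]
    · have hx : y t - ystar ≠ 0 := sub_ne_zero.mpr h
      have hpos := hW _ hx
      refine ⟨hpos.le, ?_, ?_⟩
      · intro h0; exact absurd h0.symm (ne_of_gt hpos).symm
      · intro h0; exact absurd h0 h
  obtain ⟨hle, hiff⟩ := key
  refine ⟨?_, by linarith, ?_⟩
  · have hderiv : ∀ i : Fin n, HasDerivAt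
        (fun s => y s i - ystar i - ystar i * Real.log (y s i / ystar i))
        ((y t i - ystar i) * (-R i - ∑ k, W i k * y t k)) t := by
      intro i
      have hyi := hy t i
      have hne : y t i ≠ 0 := (hypos t i).ne'
      have hdiv : HasDerivAt (fun s => y s i / ystar i)
          ((y t i * (-R i - ∑ k, W i k * y t k)) / ystar i) t := hyi.div_const _
      have hlog : HasDerivAt (fun s => Real.log (y s i / ystar i))
          (((y t i * (-R i - ∑ k, W i k * y t k)) / ystar i) / (y t i / ystar i)) t :=
        hdiv.log (div_ne_zero hne (hystar i).ne')
      have hsimp : ((y t i * (-R i - ∑ k, W i k * y t k)) / ystar i) / (y t i / ystar i)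
          = -R i - ∑ k, W i k * y t k := by
        rw [div_div_div_eq, mul_comm (y t i * _), mul_div_mul_left _ _ (hystar i).ne',
          mul_div_cancel_left₀ _ hne]
      rw [hsimp] at hlog
      have h2 := (hyi.sub_const (ystar i)).fun_sub (hlog.const_mul (ystar i))
      refine h2.congr_deriv (Eq.symm ?_)
      ring
    have hsum := HasDerivAt.fun_sum (fun i (_ : i ∈ Finset.univ) => hderiv i)
    refine hsum.congr_deriv (Eq.symm ?_)
    have hR : ∀ i : Fin n, -R i = ∑ k, W i k * ystar k := by
      intro i; linarith [heq i]
    simp only [dotProduct, mulVec, Pi.sub_apply]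
    rw [← Finset.sum_neg_distrib]
    apply Finset.sum_congr rfl
    intro i _
    have : (-R i - ∑ k, W i k * y t k) = -∑ k, W i k * (y t k - ystar k) := by
      rw [hR i, ← Finset.sum_sub_distrib, ← Finset.sum_neg_distrib]
      apply Finset.sum_congr rfl; intro k _; ring
    rw [this]
    ring
  · constructor
    · intro h0
      exact hiff.mp (by linarith)
    · intro h0
      have := hiff.mpr h0
      linarith
end

section
/- Let x : ℝ → ℝ^N and v : ℝ → ℝ^M solve the Lotka–Volterra system dx_i/dt = x_i(-r_i + Σ_k a_{ik} v_k), dv_j/dt = v_j(r̄_j - Σ_l b_{jl} x_l) with x_i(t) > 0, v_j(t) > 0. Suppose σ_l b_{lk} = ρ_k a_{kl} with ρ_k, σ_l ≠ 0, and there exist positive equilibrium values x̄ ∈ ℝ^N_{>0}, v̄ ∈ ℝ^M_{>0} with Σ_k a_{ik} v̄_k = r_i and Σ_l b_{jl} x̄_l = r̄_j. Then G(x,v) = Σ_k ρ_k (x_k - x̄_k log x_k) + Σ_l σ_l (v_l - v̄_l log v_l) is a first integral: dG(x(t),v(t))/dt = 0. -/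
/-!
Along the flow, `d/dt (x_k - x̄_k log x_k) = (x_k - x̄_k) ẋ_k / x_k`, and the equilibrium relations turn
the per-capita growth rates into `Σ_l a_kl (v_l - v̄_l)` and `-Σ_k b_lk (x_k - x̄_k)`. Hence `dG/dt` is
`Σ ρ_k a_kl ξ_k η_l - Σ σ_l b_lk η_l ξ_k` with `ξ = x - x̄`, `η = v - v̄`, which vanishes termwise
because `σ_l b_lk = ρ_k a_kl`.
-/

open Real Finset

theorem HasDerivAt.sub_const_mul_log {y : ℝ → ℝ} {g c t : ℝ} (hy : HasDerivAt y (y t * g) t)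
    (hyt : y t ≠ 0) : HasDerivAt (fun s => y s - c * Real.log (y s)) ((y t - c) * g) t := by
  refine (hy.fun_sub ((hy.log hyt).const_mul c)).congr_deriv ?_
  rw [mul_div_cancel_left₀ _ hyt]
  ring

theorem sum_mul_sub_eq_sum_mul_sub_of_sum_eq {ι : Type*} [Fintype ι] {w u ū : ι → ℝ} {c : ℝ}
    (hc : ∑ k, w k * ū k = c) : ∑ k, w k * u k - c = ∑ k, w k * (u k - ū k) := by
  simp only [← hc, ← sum_sub_distrib, mul_sub]

theorem sum_mul_sum_eq_of_mul_eq_mul {ι κ : Type*} [Fintype ι] [Fintype κ]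
    {a : Matrix ι κ ℝ} {b : Matrix κ ι ℝ} {ρ : ι → ℝ} {σ : κ → ℝ}
    (hab : ∀ k l, σ l * b l k = ρ k * a k l) (ξ : ι → ℝ) (η : κ → ℝ) :
    ∑ k, ρ k * (ξ k * ∑ l, a k l * η l) = ∑ l, σ l * (η l * ∑ k, b l k * ξ k) := by
  simp only [mul_sum]
  rw [sum_comm]
  refine sum_congr rfl fun l _ => sum_congr rfl fun k _ => ?_
  linear_combination (-(ξ k * η l)) * hab k l

theorem stmt_9_general (N M : ℕ)
    (r : Fin N → ℝ) (rbar : Fin M → ℝ)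
    (a : Matrix (Fin N) (Fin M) ℝ) (b : Matrix (Fin M) (Fin N) ℝ)
    (ρ : Fin N → ℝ) (σ : Fin M → ℝ)
    (hham : ∀ k l, σ l * b l k = ρ k * a k l)
    (xbar : Fin N → ℝ) (vbar : Fin M → ℝ)
    (heq1 : ∀ i, ∑ k, a i k * vbar k = r i)
    (heq2 : ∀ j, ∑ l, b j l * xbar l = rbar j)
    (x : ℝ → Fin N → ℝ) (v : ℝ → Fin M → ℝ)
    (hxpos : ∀ t i, 0 < x t i) (hvpos : ∀ t j, 0 < v t j)
    (hx : ∀ t i, HasDerivAt (fun s => x s i)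
      (x t i * (-r i + ∑ k, a i k * v t k)) t)
    (hv : ∀ t j, HasDerivAt (fun s => v s j)
      (v t j * (rbar j - ∑ l, b j l * x t l)) t) :
    ∀ t, HasDerivAt
      (fun s => (∑ k, ρ k * (x s k - xbar k * Real.log (x s k))) +
        ∑ l, σ l * (v s l - vbar l * Real.log (v s l))) 0 t := by
  intro t
  have hGx : ∀ k, HasDerivAt (fun s => ρ k * (x s k - xbar k * log (x s k)))
      (ρ k * ((x t k - xbar k) * ∑ l, a k l * (v t l - vbar l))) t := fun k => by
    have hk := hx t k
    rw [neg_add_eq_sub, sum_mul_sub_eq_sum_mul_sub_of_sum_eq (heq1 k)] at hk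
    exact (hk.sub_const_mul_log (hxpos t k).ne').const_mul _
  have hGv : ∀ l, HasDerivAt (fun s => σ l * (v s l - vbar l * log (v s l)))
      (-(σ l * ((v t l - vbar l) * ∑ k, b l k * (x t k - xbar k)))) t := fun l => by
    have hl := hv t l
    rw [← neg_sub, sum_mul_sub_eq_sum_mul_sub_of_sum_eq (heq2 l)] at hl
    simpa only [mul_neg] using (hl.sub_const_mul_log (hvpos t l).ne').const_mul (σ l)
  refine ((HasDerivAt.fun_sum fun k _ => hGx k).add
    (HasDerivAt.fun_sum fun l _ => hGv l)).congr_deriv ?_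
  rw [sum_neg_distrib, sum_mul_sum_eq_of_mul_eq_mul hham, add_neg_cancel]

/-- The function G(x,v) = Σ ρ_k (x_k - x̄_k log x_k) + Σ σ_l (v_l - v̄_l log v_l)
is a first integral of the Hamiltonian Lotka–Volterra system. -/
theorem stmt_9 (N M : ℕ) (hN : 1 ≤ N) (hM : 1 ≤ M)
    (r : Fin N → ℝ) (rbar : Fin M → ℝ)
    (a : Matrix (Fin N) (Fin M) ℝ) (b : Matrix (Fin M) (Fin N) ℝ)
    (ρ : Fin N → ℝ) (σ : Fin M → ℝ) (hρ : ∀ k, ρ k ≠ 0) (hσ : ∀ l, σ l ≠ 0)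
    (hham : ∀ k l, σ l * b l k = ρ k * a k l)
    (xbar : Fin N → ℝ) (vbar : Fin M → ℝ)
    (hxbar : ∀ k, 0 < xbar k) (hvbar : ∀ l, 0 < vbar l)
    (heq1 : ∀ i, ∑ k, a i k * vbar k = r i)
    (heq2 : ∀ j, ∑ l, b j l * xbar l = rbar j)
    (x : ℝ → Fin N → ℝ) (v : ℝ → Fin M → ℝ)
    (hxpos : ∀ t i, 0 < x t i) (hvpos : ∀ t j, 0 < v t j)
    (hx : ∀ t i, HasDerivAt (fun s => x s i)
      (x t i * (-r i + ∑ k, a i k * v t k)) t)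
    (hv : ∀ t j, HasDerivAt (fun s => v s j)
      (v t j * (rbar j - ∑ l, b j l * x t l)) t) :
    ∀ t, HasDerivAt
      (fun s => (∑ k, ρ k * (x s k - xbar k * Real.log (x s k))) +
        ∑ l, σ l * (v s l - vbar l * Real.log (v s l))) 0 t :=
  stmt_9_general N M r rbar a b ρ σ hham xbar vbar heq1 heq2 x v hxpos hvpos hx hv
end

section
/- Star-system change of variables: let q : ℝ → ℝ be twice differentiable with dq/dt(t) + μ > 0 for all t, and define v(t) = dq/dt(t) + μ and x_i(t) = C_i exp(a_i q(t)) for constants C_i > 0, a_i, μ > 0, with r_i = a_i μ. If q satisfies d²q/dt² = (dq/dt + μ)(r̄ - Σ_j b_j C_j exp(a_j q)), then (x, v) solves dx_i/dt = x_i(-r_i + a_i v) and dv/dt = v(r̄ - Σ_l b_l x_l). -/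
open Real

theorem hasDerivAt_const_mul_exp_const_mul {f : ℝ → ℝ} {f' t : ℝ} (C a : ℝ)
    (hf : HasDerivAt f f' t) :
    HasDerivAt (fun s => C * exp (a * f s)) (C * exp (a * f t) * (a * f')) t := by
  simpa only [mul_assoc] using ((hf.const_mul a).exp).const_mul C

theorem stmt_10_general (N : ℕ) (a b C : Fin N → ℝ) (rbar μ : ℝ)
    (q q' : ℝ → ℝ)
    (hq : ∀ t, HasDerivAt q (q' t) t)
    (hq' : ∀ t, HasDerivAt q'
      ((q' t + μ) * (rbar - ∑ j, b j * C j * Real.exp (a j * q t))) t) :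
    (∀ i t, HasDerivAt (fun s => C i * Real.exp (a i * q s))
        ((C i * Real.exp (a i * q t)) * (-(a i * μ) + a i * (q' t + μ))) t) ∧
    (∀ t, HasDerivAt (fun s => q' s + μ)
        ((q' t + μ) * (rbar - ∑ l, b l * (C l * Real.exp (a l * q t)))) t) := by
  refine ⟨fun i t => ?_, fun t => ?_⟩
  · convert hasDerivAt_const_mul_exp_const_mul (C i) (a i) (hq t) using 1
    ring
  · simpa only [mul_assoc] using (hq' t).add_const μ

/-- Star-system change of variables: if q satisfies the second-order equation
q'' = (q' + μ)(r̄ - Σ b_j C_j exp(a_j q)), then x_i = C_i exp(a_i q),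
v = q' + μ solve the star Lotka–Volterra system with r_i = a_i μ. -/
theorem stmt_10 (N : ℕ) (hN : 1 ≤ N) (a b C : Fin N → ℝ) (rbar μ : ℝ)
    (hμ : 0 < μ) (hC : ∀ i, 0 < C i)
    (q q' : ℝ → ℝ)
    (hq : ∀ t, HasDerivAt q (q' t) t)
    (hpos : ∀ t, 0 < q' t + μ)
    (hq' : ∀ t, HasDerivAt q'
      ((q' t + μ) * (rbar - ∑ j, b j * C j * Real.exp (a j * q t))) t) :
    (∀ i t, HasDerivAt (fun s => C i * Real.exp (a i * q s))
        ((C i * Real.exp (a i * q t)) * (-(a i * μ) + a i * (q' t + μ))) t) ∧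
    (∀ t, HasDerivAt (fun s => q' s + μ)
        ((q' t + μ) * (rbar - ∑ l, b l * (C l * Real.exp (a l * q t)))) t) :=
  stmt_10_general N a b C rbar μ q q' hq hq'
end

section
/- Let Φ(q) = Σ_{k=1}^N c_k exp(w_k · q) - r̄ · q where c_k > 0, w_k ∈ ℝ^M, r̄ ∈ ℝ^M. If there exists z ∈ ℝ^N with z_k > 0 such that r̄ = Σ_k z_k w_k and the vectors {w_k} span ℝ^M, then Φ(q) → +∞ as |q| → ∞. -/
/-!
Termwise, `c e^t - z t ≥ z |t| - 2 z² / c`, so with `r̄ = Σ z_k w_k` we get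
`Φ(q) ≥ Σ z_k |⟪w_k, q⟫| - Σ 2 z_k² / c_k`. As the `w_k` span, `q ↦ (z_k ⟪w_k, q⟫)_k` is
injective, so in finite dimension it is anti-Lipschitz and the sum is at least `ε ‖q‖`.
-/

open Real RealInnerProductSpace

theorem mul_abs_sub_le_mul_exp_sub_mul {c : ℝ} (hc : 0 < c) (z t : ℝ) :
    z * |t| - 2 * z ^ 2 / c ≤ c * exp t - z * t := by
  have hC : 0 ≤ 2 * z ^ 2 / c := by positivity
  rcases le_or_gt t 0 with ht | ht
  · rw [abs_of_nonpos ht]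
    nlinarith [exp_pos t]
  · rw [abs_of_pos ht]
    -- `c e^t ≥ c t² / 2` and `c t² / 2 - 2 z t` is minimal at `t = 2 z / c`.
    have hexp : 1 + t + t ^ 2 / 2 ≤ exp t := quadratic_le_exp_of_nonneg ht.le
    have hquad : 2 * z * t - 2 * z ^ 2 / c ≤ c * (t ^ 2 / 2) := by
      rw [sub_le_iff_le_add, ← sub_le_iff_le_add', le_div_iff₀ hc]
      nlinarith [sq_nonneg (c * t - 2 * z)]
    nlinarith

section

variable {ι E : Type*} [NormedAddCommGroup E] [InnerProductSpace ℝ E]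

theorem eq_zero_of_forall_inner_eq_zero {w : ι → E} (hspan : Submodule.span ℝ (Set.range w) = ⊤)
    {q : E} (h : ∀ k, ⟪w k, q⟫ = 0) : q = 0 := by
  have : innerₛₗ ℝ q = 0 :=
    LinearMap.ext_on_range hspan fun k => by simpa [real_inner_comm] using h k
  simpa using LinearMap.congr_fun this q

theorem exists_pos_mul_norm_le_sum_mul_abs_inner [Fintype ι] [FiniteDimensional ℝ E] {w : ι → E}
    (hspan : Submodule.span ℝ (Set.range w) = ⊤) {z : ι → ℝ} (hz : ∀ k, 0 < z k) :
    ∃ ε > 0, ∀ q, ε * ‖q‖ ≤ ∑ k, z k * |⟪w k, q⟫| := by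
  let L : E →ₗ[ℝ] ι → ℝ := LinearMap.pi fun k => z k • innerₛₗ ℝ (w k)
  have hL : LinearMap.ker L = ⊥ := by
    refine LinearMap.ker_eq_bot'.mpr fun q hq => eq_zero_of_forall_inner_eq_zero hspan fun k => ?_
    simpa [L, (hz k).ne'] using congr_fun hq k
  obtain ⟨K, -, hK⟩ := L.exists_antilipschitzWith hL
  obtain ⟨ε, hε, hεL⟩ := antilipschitzWith_iff_exists_mul_le_norm.mp ⟨K, hK⟩
  refine ⟨ε, hε, fun q => (hεL q).trans ?_⟩
  have hterm : ∀ k, 0 ≤ z k * |⟪w k, q⟫| := fun k => mul_nonneg (hz k).le (abs_nonneg _)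
  refine (pi_norm_le_iff_of_nonneg (Finset.sum_nonneg fun k _ => hterm k)).mpr fun k => ?_
  calc ‖L q k‖ = z k * |⟪w k, q⟫| := by simp [L, abs_of_pos (hz k)]
    _ ≤ ∑ k, z k * |⟪w k, q⟫| :=
      Finset.single_le_sum (f := fun k => z k * |⟪w k, q⟫|) (fun k _ => hterm k) (Finset.mem_univ k)

theorem sum_mul_abs_inner_sub_le [Fintype ι] {c : ι → ℝ} (hc : ∀ k, 0 < c k) (z : ι → ℝ)
    (w : ι → E) (q : E) :
    ∑ k, z k * |⟪w k, q⟫| - ∑ k, 2 * z k ^ 2 / c k ≤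
      ∑ k, c k * exp ⟪w k, q⟫ - ⟪∑ k, z k • w k, q⟫ := by
  simp only [sum_inner, real_inner_smul_left, ← Finset.sum_sub_distrib]
  exact Finset.sum_le_sum fun k _ => mul_abs_sub_le_mul_exp_sub_mul (hc k) _ _

end

theorem stmt_16_general (N M : ℕ)
    (c : Fin N → ℝ) (hc : ∀ k, 0 < c k)
    (w : Fin N → EuclideanSpace ℝ (Fin M)) (rbar : EuclideanSpace ℝ (Fin M))
    (z : Fin N → ℝ) (hz : ∀ k, 0 < z k) (hr : rbar = ∑ k, z k • w k)
    (hspan : Submodule.span ℝ (Set.range w) = ⊤) :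
    ∀ R : ℝ, ∃ S : ℝ, ∀ q : EuclideanSpace ℝ (Fin M), S < ‖q‖ →
      R < (∑ k, c k * Real.exp ((inner ℝ (w k) q : ℝ))) - (inner ℝ rbar q : ℝ) := by
  intro R
  obtain ⟨ε, hε, hlow⟩ := exists_pos_mul_norm_le_sum_mul_abs_inner hspan hz
  set C := ∑ k, 2 * z k ^ 2 / c k
  refine ⟨(R + C) / ε, fun q hq => ?_⟩
  have hRq : R + C < ε * ‖q‖ := by rwa [div_lt_iff₀' hε] at hq
  have hΦ := sum_mul_abs_inner_sub_le hc z w q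
  rw [← hr] at hΦ
  linarith [hlow q]

/-- If r̄ is a strictly positive combination of the exponents w_k and the w_k
span ℝ^M, then Φ(q) = Σ c_k exp(⟪w_k, q⟫) - ⟪r̄, q⟫ is coercive. -/
theorem stmt_16 (N M : ℕ) (hN : 1 ≤ N) (hM : 1 ≤ M)
    (c : Fin N → ℝ) (hc : ∀ k, 0 < c k)
    (w : Fin N → EuclideanSpace ℝ (Fin M)) (rbar : EuclideanSpace ℝ (Fin M))
    (z : Fin N → ℝ) (hz : ∀ k, 0 < z k) (hr : rbar = ∑ k, z k • w k)
    (hspan : Submodule.span ℝ (Set.range w) = ⊤) :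
    ∀ R : ℝ, ∃ S : ℝ, ∀ q : EuclideanSpace ℝ (Fin M), S < ‖q‖ →
      R < (∑ k, c k * Real.exp ((inner ℝ (w k) q : ℝ))) - (inner ℝ rbar q : ℝ) :=
  stmt_16_general N M c hc w rbar z hz hr hspan
end

section
/- Conversely: let Φ(q) = Σ_{k=1}^N c_k exp(w_k·q) - r̄·q with c_k > 0. If Φ(q) → +∞ as |q| → ∞, then r̄ lies in the interior of the convex cone generated by {w_1, …, w_N}; in particular there exist z_k > 0 with r̄ = Σ_k z_k w_k, and {w_k} spans ℝ^M. -/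
/-!
The potential `Φ_y(q) = ∑ c_k exp ⟪w_k, q⟫ - ⟪y, q⟫` is convex, so coercivity of `Φ_rbar` forces
linear growth `Φ_rbar(q) ≥ Φ_rbar(0) + a‖q‖` at infinity. Since `Φ_y = Φ_rbar - ⟪y - rbar, ·⟫`,
every `Φ_y` with `‖y - rbar‖ < a` is still coercive and has a minimiser `q₀`, where the vanishing
gradient gives `y = ∑ c_k exp ⟪w_k, q₀⟫ • w_k`. So a whole ball around `rbar` consists of strictly
positive combinations of the `w_k`, and a cone with nonempty interior spans the space.
-/

open Real Filter RealInnerProductSpace Finset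

section Coercive

variable {E : Type*} [NormedAddCommGroup E]

theorem tendsto_cobounded_atTop_of_forall_exists {f : E → ℝ}
    (h : ∀ R : ℝ, ∃ S : ℝ, ∀ q : E, S < ‖q‖ → R < f q) :
    Tendsto f (Bornology.cobounded E) atTop := by
  refine tendsto_atTop.2 fun R => ?_
  obtain ⟨S, hS⟩ := h R
  exact (eventually_cobounded_le_norm (S + 1)).mono fun q hq => (hS q (by linarith)).le

theorem ConvexOn.exists_pos_mul_norm_le_of_tendsto [NormedSpace ℝ E] {f : E → ℝ}
    (hf : ConvexOn ℝ Set.univ f) (h : Tendsto f (Bornology.cobounded E) atTop) :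
    ∃ a > 0, ∀ᶠ q in Bornology.cobounded E, f 0 + a * ‖q‖ ≤ f q := by
  obtain ⟨R, -, hR⟩ := hasBasis_cobounded_norm.eventually_iff.1 (h.eventually_ge_atTop (f 0 + 1))
  set R' := max R 1
  have hR' : 0 < R' := lt_of_lt_of_le one_pos (le_max_right R 1)
  refine ⟨R'⁻¹, inv_pos.2 hR', (eventually_cobounded_le_norm R').mono fun q hq => ?_⟩
  have hq0 : 0 < ‖q‖ := hR'.trans_le hq
  set t := R' / ‖q‖
  have ht0 : 0 < t := div_pos hR' hq0
  have ht1 : t ≤ 1 := (div_le_one hq0).2 hq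
  -- compare `f` at `q` with `f` at the point `t • q` of norm `R'` on the segment `[0, q]`
  have hmid : f (t • q) ≤ (1 - t) * f 0 + t * f q := by
    simpa using
      hf.2 (Set.mem_univ 0) (Set.mem_univ q) (sub_nonneg.2 ht1) ht0.le (sub_add_cancel 1 t)
  have hfar : f 0 + 1 ≤ f (t • q) := by
    refine hR (le_trans (le_max_left R 1) (le_of_eq ?_))
    rw [norm_smul, Real.norm_of_nonneg ht0.le, div_mul_cancel₀ _ hq0.ne']
  have hslope : 1 / t ≤ f q - f 0 := (div_le_iff₀ ht0).2 (by linarith)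
  have hinv : R'⁻¹ * ‖q‖ = 1 / t := by rw [one_div, inv_div, div_eq_inv_mul]
  linarith

theorem tendsto_sub_inner_cobounded [InnerProductSpace ℝ E] {f : E → ℝ} {a b : ℝ} {v : E}
    (hf : ∀ᶠ q in Bornology.cobounded E, b + a * ‖q‖ ≤ f q) (hv : ‖v‖ < a) :
    Tendsto (fun q => f q - ⟪v, q⟫) (Bornology.cobounded E) atTop := by
  refine tendsto_atTop_mono' _ (hf.mono fun q hq => ?_) (tendsto_atTop_add_const_left _ b
    (tendsto_norm_cobounded_atTop.const_mul_atTop (sub_pos.2 hv)))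
  linarith [real_inner_le_norm v q]

end Coercive

section ExpPotential

variable {ι E : Type*} [Fintype ι] [NormedAddCommGroup E] [InnerProductSpace ℝ E]

noncomputable def expPotential (c : ι → ℝ) (w : ι → E) (y q : E) : ℝ :=
  (∑ k, c k * exp ⟪w k, q⟫) - ⟪y, q⟫

variable (c : ι → ℝ) (w : ι → E) (y : E)

theorem expPotential_sub_inner (y' q : E) :
    expPotential c w y' q = expPotential c w y q - ⟪y' - y, q⟫ := by
  simp only [expPotential, inner_sub_left]
  ring

theorem convexOn_expPotential (hc : ∀ k, 0 ≤ c k) :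
    ConvexOn ℝ Set.univ (expPotential c w y) := by
  refine ⟨convex_univ, fun x _ x' _ s t hs ht hst => ?_⟩
  have hterm : ∀ k, c k * exp (s * ⟪w k, x⟫ + t * ⟪w k, x'⟫) ≤
      s * (c k * exp ⟪w k, x⟫) + t * (c k * exp ⟪w k, x'⟫) := fun k => by
    have := convexOn_exp.2 (Set.mem_univ ⟪w k, x⟫) (Set.mem_univ ⟪w k, x'⟫) hs ht hst
    simp only [smul_eq_mul] at this
    linarith [mul_le_mul_of_nonneg_left this (hc k)]
  have hsum := sum_le_sum fun k (_ : k ∈ univ) => hterm k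
  simp only [expPotential, smul_eq_mul, inner_add_right, real_inner_smul_right]
  rw [sum_add_distrib, ← mul_sum, ← mul_sum] at hsum
  linarith

theorem hasFDerivAt_expPotential (q : E) :
    HasFDerivAt (expPotential c w y)
      (innerSL ℝ ((∑ k, (c k * exp ⟪w k, q⟫) • w k) - y)) q := by
  have hterm : ∀ k, HasFDerivAt (fun q => c k * exp ⟪w k, q⟫)
      ((c k * exp ⟪w k, q⟫) • innerSL ℝ (w k)) q := fun k => by
    simpa only [smul_smul, innerSL_apply_apply] using
      (innerSL ℝ (w k)).hasFDerivAt.exp.const_mul (c k)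
  refine ((HasFDerivAt.fun_sum (u := univ) fun k _ => hterm k).sub
    (innerSL ℝ y).hasFDerivAt).congr_fderiv ?_
  ext v
  simp

theorem exists_pos_sum_smul_eq_of_tendsto [ProperSpace E] (hc : ∀ k, 0 < c k)
    (h : Tendsto (expPotential c w y) (cocompact E) atTop) :
    ∃ z : ι → ℝ, (∀ k, 0 < z k) ∧ y = ∑ k, z k • w k := by
  have hcont : Continuous (expPotential c w y) :=
    continuous_iff_continuousAt.2 fun q => (hasFDerivAt_expPotential c w y q).continuousAt
  obtain ⟨q₀, hq₀⟩ := hcont.exists_forall_le h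
  have hmin : IsLocalMin (expPotential c w y) q₀ := Eventually.of_forall hq₀
  have hgrad := hmin.hasFDerivAt_eq_zero (hasFDerivAt_expPotential c w y q₀)
  refine ⟨fun k => c k * exp ⟪w k, q₀⟫, fun k => mul_pos (hc k) (exp_pos _), ?_⟩
  rw [eq_comm, ← sub_eq_zero, ← norm_eq_zero, ← innerSL_apply_norm ℝ, hgrad, norm_zero]

end ExpPotential

theorem stmt_17_general (N M : ℕ)
    (c : Fin N → ℝ) (hc : ∀ k, 0 < c k)
    (w : Fin N → EuclideanSpace ℝ (Fin M)) (rbar : EuclideanSpace ℝ (Fin M))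
    (hcoer : ∀ R : ℝ, ∃ S : ℝ, ∀ q : EuclideanSpace ℝ (Fin M), S < ‖q‖ →
      R < (∑ k, c k * Real.exp ((inner ℝ (w k) q : ℝ))) - (inner ℝ rbar q : ℝ)) :
    rbar ∈ interior {y : EuclideanSpace ℝ (Fin M) |
        ∃ z : Fin N → ℝ, (∀ k, 0 ≤ z k) ∧ y = ∑ k, z k • w k} ∧
    (∃ z : Fin N → ℝ, (∀ k, 0 < z k) ∧ rbar = ∑ k, z k • w k) ∧
    Submodule.span ℝ (Set.range w) = ⊤ := by
  obtain ⟨a, ha, hgrow⟩ := (convexOn_expPotential c w rbar fun k => (hc k).le)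
    |>.exists_pos_mul_norm_le_of_tendsto (tendsto_cobounded_atTop_of_forall_exists hcoer)
  have hpos : ∀ y ∈ Metric.ball rbar a, ∃ z : Fin N → ℝ, (∀ k, 0 < z k) ∧ y = ∑ k, z k • w k := by
    intro y hy
    refine exists_pos_sum_smul_eq_of_tendsto c w y hc ?_
    rw [← Metric.cobounded_eq_cocompact, funext (expPotential_sub_inner c w rbar y)]
    exact tendsto_sub_inner_cobounded hgrow (by rwa [← dist_eq_norm])
  have hint : rbar ∈ interior {y : EuclideanSpace ℝ (Fin M) |
      ∃ z : Fin N → ℝ, (∀ k, 0 ≤ z k) ∧ y = ∑ k, z k • w k} :=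
    mem_interior.2 ⟨_, fun y hy => (hpos y hy).imp fun z hz => ⟨fun k => (hz.1 k).le, hz.2⟩,
      Metric.isOpen_ball, Metric.mem_ball_self ha⟩
  refine ⟨hint, hpos rbar (Metric.mem_ball_self ha),
    Submodule.eq_top_of_nonempty_interior' _ ⟨rbar, interior_mono ?_ hint⟩⟩
  rintro _ ⟨z, -, rfl⟩
  exact Submodule.sum_mem _ fun k _ => Submodule.smul_mem _ _ (Submodule.subset_span ⟨k, rfl⟩)

/-- Conversely, coercivity of Φ(q) = Σ c_k exp(⟪w_k, q⟫) - ⟪r̄, q⟫ forces r̄ to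
lie in the interior of the convex cone generated by the w_k; in particular r̄ is
a strictly positive combination of the w_k, and the w_k span ℝ^M. -/
theorem stmt_17 (N M : ℕ) (hN : 1 ≤ N) (hM : 1 ≤ M)
    (c : Fin N → ℝ) (hc : ∀ k, 0 < c k)
    (w : Fin N → EuclideanSpace ℝ (Fin M)) (rbar : EuclideanSpace ℝ (Fin M))
    (hcoer : ∀ R : ℝ, ∃ S : ℝ, ∀ q : EuclideanSpace ℝ (Fin M), S < ‖q‖ →
      R < (∑ k, c k * Real.exp ((inner ℝ (w k) q : ℝ))) - (inner ℝ rbar q : ℝ)) :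
    rbar ∈ interior {y : EuclideanSpace ℝ (Fin M) |
        ∃ z : Fin N → ℝ, (∀ k, 0 ≤ z k) ∧ y = ∑ k, z k • w k} ∧
    (∃ z : Fin N → ℝ, (∀ k, 0 < z k) ∧ rbar = ∑ k, z k • w k) ∧
    Submodule.span ℝ (Set.range w) = ⊤ :=
  stmt_17_general N M c hc w rbar hcoer
end
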